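/- arXiv:2412.19882 — 6 statements merged into one kernel-verified Lean document; each statement's English description precedes it below -/
import Mathlib

section
/- Let Δ > 0 and a, b, c, d ∈ ℝ with ad − bc = 1. For t ≠ 0 set G_Δ(t) = Γ(2Δ) e^{−iπΔ sgn(t)} |t|^{−2Δ} ∈ ℂ, and for a − ct ≠ 0 set χ₊(t) = |a − ct|^{2(Δ−1)} e^{+2πiΔ sgn(c) Θ(ct − a)} and χ₋(t) = |a − ct|^{2(Δ−1)} e^{−2πiΔ sgn(c) Θ(ct − a)}. Then for all t₁ ≠ t₂ with a − c t₁ ≠ 0 and a − c t₂ ≠ 0, writing tᵢ' = (d tᵢ − b)/(a − c tᵢ), one has G_Δ(t₁' − t₂') = G_Δ(t₁ − t₂) · χ₊(t₁) · χ₋(t₂) · ((a − c t₁)(a − c t₂))². -/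
/-- Heaviside step function: `Θ(x) = 1` if `0 < x` and `Θ(x) = 0` otherwise. -/
noncomputable def heaviside (x : ℝ) : ℝ := if 0 < x then 1 else 0

/-- The vacuum two-point function of the 0+1-dimensional conformal generalized free field:
`G_Δ(t) = Γ(2Δ) e^(-iπΔ sgn t) |t|^(-2Δ)`. -/
noncomputable def Gdelta (Δ t : ℝ) : ℂ :=
  ((Real.Gamma (2 * Δ) : ℝ) : ℂ) *
    Complex.exp (-(((Real.pi * Δ * Real.sign t : ℝ) : ℂ)) * Complex.I) *
    ((|t| ^ (-(2 * Δ)) : ℝ) : ℂ)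

/-- `χ₊(t) = |a - ct|^(2(Δ-1)) e^(+2πiΔ sgn(c) Θ(ct - a))`. -/
noncomputable def chiPlus (Δ a c t : ℝ) : ℂ :=
  ((|a - c * t| ^ (2 * (Δ - 1)) : ℝ) : ℂ) *
    Complex.exp (((2 * Real.pi * Δ * Real.sign c * heaviside (c * t - a) : ℝ) : ℂ) * Complex.I)

/-- `χ₋(t) = |a - ct|^(2(Δ-1)) e^(-2πiΔ sgn(c) Θ(ct - a))`. -/
noncomputable def chiMinus (Δ a c t : ℝ) : ℂ :=
  ((|a - c * t| ^ (2 * (Δ - 1)) : ℝ) : ℂ) *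
    Complex.exp (-(((2 * Real.pi * Δ * Real.sign c * heaviside (c * t - a) : ℝ) : ℂ)) * Complex.I)

/-- Sign bookkeeping: `sgn(s/((a-ct₁)(a-ct₂))) = sgn s - 2 sgn(c)(Θ(ct₁-a) - Θ(ct₂-a))`. -/
lemma sign_key (a c t₁ t₂ : ℝ) (hs : t₁ - t₂ ≠ 0)
    (h1 : a - c * t₁ ≠ 0) (h2 : a - c * t₂ ≠ 0) :
    Real.sign ((t₁ - t₂) / ((a - c * t₁) * (a - c * t₂))) =
      Real.sign (t₁ - t₂) -
        2 * Real.sign c * (heaviside (c * t₁ - a) - heaviside (c * t₂ - a)) := by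
  rcases h1.lt_or_gt with h1' | h1' <;> rcases h2.lt_or_gt with h2' | h2'
  · have hP : 0 < (a - c * t₁) * (a - c * t₂) := mul_pos_of_neg_of_neg h1' h2'
    have hH1 : heaviside (c * t₁ - a) = 1 := by simp [heaviside]; linarith
    have hH2 : heaviside (c * t₂ - a) = 1 := by simp [heaviside]; linarith
    rcases hs.lt_or_gt with hs' | hs'
    · rw [Real.sign_of_neg (div_neg_of_neg_of_pos hs' hP), Real.sign_of_neg hs', hH1, hH2]; ring
    · rw [Real.sign_of_pos (div_pos hs' hP), Real.sign_of_pos hs', hH1, hH2]; ring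
  · have hP : (a - c * t₁) * (a - c * t₂) < 0 := mul_neg_of_neg_of_pos h1' h2'
    have hH1 : heaviside (c * t₁ - a) = 1 := by simp [heaviside]; linarith
    have hH2 : heaviside (c * t₂ - a) = 0 := by simp [heaviside]; linarith
    have hcs : 0 < c * (t₁ - t₂) := by nlinarith
    rcases lt_trichotomy c 0 with hc | hc | hc
    · have hs' : t₁ - t₂ < 0 := by nlinarith
      rw [Real.sign_of_pos (div_pos_of_neg_of_neg hs' hP), Real.sign_of_neg hs',
        Real.sign_of_neg hc, hH1, hH2]; ring
    · exfalso; rw [hc] at hcs; simp at hcs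
    · have hs' : 0 < t₁ - t₂ := by nlinarith
      rw [Real.sign_of_neg (div_neg_of_pos_of_neg hs' hP), Real.sign_of_pos hs',
        Real.sign_of_pos hc, hH1, hH2]; ring
  · have hP : (a - c * t₁) * (a - c * t₂) < 0 := mul_neg_of_pos_of_neg h1' h2'
    have hH1 : heaviside (c * t₁ - a) = 0 := by simp [heaviside]; linarith
    have hH2 : heaviside (c * t₂ - a) = 1 := by simp [heaviside]; linarith
    have hcs : c * (t₁ - t₂) < 0 := by nlinarith
    rcases lt_trichotomy c 0 with hc | hc | hc
    · have hs' : 0 < t₁ - t₂ := by nlinarith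
      rw [Real.sign_of_neg (div_neg_of_pos_of_neg hs' hP), Real.sign_of_pos hs',
        Real.sign_of_neg hc, hH1, hH2]; ring
    · exfalso; rw [hc] at hcs; simp at hcs
    · have hs' : t₁ - t₂ < 0 := by nlinarith
      rw [Real.sign_of_pos (div_pos_of_neg_of_neg hs' hP), Real.sign_of_neg hs',
        Real.sign_of_pos hc, hH1, hH2]; ring
  · have hP : 0 < (a - c * t₁) * (a - c * t₂) := mul_pos h1' h2'
    have hH1 : heaviside (c * t₁ - a) = 0 := by simp [heaviside]; linarith
    have hH2 : heaviside (c * t₂ - a) = 0 := by simp [heaviside]; linarith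
    rcases hs.lt_or_gt with hs' | hs'
    · rw [Real.sign_of_neg (div_neg_of_neg_of_pos hs' hP), Real.sign_of_neg hs', hH1, hH2]; ring
    · rw [Real.sign_of_pos (div_pos hs' hP), Real.sign_of_pos hs', hH1, hH2]; ring

/-- Magnitude bookkeeping for the rescaled argument. -/
lemma mag_key (Δ s u v : ℝ) (hu : u ≠ 0) (hv : v ≠ 0) :
    |s / (u * v)| ^ (-(2 * Δ)) =
      |s| ^ (-(2 * Δ)) * (|u| ^ (2 * (Δ - 1)) * (|v| ^ (2 * (Δ - 1)) * (u * v) ^ 2)) := by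
  have hu' : 0 < |u| := abs_pos.mpr hu
  have hv' : 0 < |v| := abs_pos.mpr hv
  have key : ∀ x : ℝ, x ≠ 0 → |x| ^ (2 * (Δ - 1)) * x ^ 2 = |x| ^ (2 * Δ) := by
    intro x hx
    rw [← sq_abs, ← Real.rpow_natCast |x| 2, ← Real.rpow_add (abs_pos.mpr hx)]
    congr 1; push_cast; ring
  have hre : |u| ^ (2*(Δ-1)) * (|v| ^ (2*(Δ-1)) * (u*v)^2)
      = (|u| ^ (2*(Δ-1)) * u^2) * (|v| ^ (2*(Δ-1)) * v^2) := by ring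
  rw [abs_div, Real.div_rpow (abs_nonneg s) (abs_nonneg _), abs_mul,
    Real.mul_rpow (abs_nonneg u) (abs_nonneg v), hre, key u hu, key v hv,
    Real.rpow_neg (abs_nonneg u), Real.rpow_neg (abs_nonneg v)]
  have hB : |u| ^ (2*Δ) ≠ 0 := (Real.rpow_pos_of_pos hu' _).ne'
  have hC : |v| ^ (2*Δ) ≠ 0 := (Real.rpow_pos_of_pos hv' _).ne'
  field_simp

/-- Covariance of the conformal GFF two-point function under PSL(2,ℝ) Möbius maps
(equation "psl2r_action_2point"):
`G_Δ(t₁' - t₂') = G_Δ(t₁ - t₂) χ₊(t₁) χ₋(t₂) ((a - ct₁)(a - ct₂))²`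
where `tᵢ' = (d tᵢ - b)/(a - c tᵢ)` and `ad - bc = 1`. -/
theorem two_point_function_psl2r_covariance
    (Δ a b c d t₁ t₂ : ℝ) (hΔ : 0 < Δ) (hdet : a * d - b * c = 1)
    (h12 : t₁ ≠ t₂) (h1 : a - c * t₁ ≠ 0) (h2 : a - c * t₂ ≠ 0) :
    Gdelta Δ ((d * t₁ - b) / (a - c * t₁) - (d * t₂ - b) / (a - c * t₂)) =
      Gdelta Δ (t₁ - t₂) * chiPlus Δ a c t₁ * chiMinus Δ a c t₂ *
        ((((a - c * t₁) * (a - c * t₂)) ^ 2 : ℝ) : ℂ) := by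
  have hs : t₁ - t₂ ≠ 0 := sub_ne_zero.mpr h12
  have harg : (d * t₁ - b) / (a - c * t₁) - (d * t₂ - b) / (a - c * t₂) =
      (t₁ - t₂) / ((a - c * t₁) * (a - c * t₂)) := by
    rw [div_sub_div _ _ h1 h2]; congr 1
    linear_combination (t₁ - t₂) * hdet
  rw [harg]
  unfold Gdelta chiPlus chiMinus
  have hmag := mag_key Δ (t₁ - t₂) (a - c * t₁) (a - c * t₂) h1 h2
  have hexp : Complex.exp
        (-(((Real.pi * Δ * Real.sign ((t₁ - t₂) / ((a - c * t₁) * (a - c * t₂))) : ℝ) : ℂ)) *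
          Complex.I) =
      Complex.exp (-(((Real.pi * Δ * Real.sign (t₁ - t₂) : ℝ) : ℂ)) * Complex.I) *
        Complex.exp
          (((2 * Real.pi * Δ * Real.sign c * heaviside (c * t₁ - a) : ℝ) : ℂ) * Complex.I) *
        Complex.exp
          (-(((2 * Real.pi * Δ * Real.sign c * heaviside (c * t₂ - a) : ℝ) : ℂ)) * Complex.I) := by
    rw [← Complex.exp_add, ← Complex.exp_add]
    congr 1
    have hkey := sign_key a c t₁ t₂ hs h1 h2
    have : Real.pi * Δ * Real.sign ((t₁ - t₂) / ((a - c * t₁) * (a - c * t₂)))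
        = Real.pi * Δ * Real.sign (t₁ - t₂)
          - 2 * Real.pi * Δ * Real.sign c * heaviside (c * t₁ - a)
          + 2 * Real.pi * Δ * Real.sign c * heaviside (c * t₂ - a) := by
      rw [hkey]; ring
    rw [this]
    push_cast
    ring
  rw [hexp, hmag]
  push_cast
  ring
end

section
/- Let a₁, b₁, c₁, d₁, a₂, b₂, c₂, d₂ ∈ ℝ satisfy a₁d₁ − b₁c₁ = 1, a₂d₂ − b₂c₂ = 1, c₁ ≠ 0 and c₂ ≠ 0, and set a₃ = a₁a₂ + b₂c₁ and c₃ = a₁c₂ + c₁d₂ (the corresponding entries of the matrix product of (a₂,b₂;c₂,d₂) with (a₁,b₁;c₁,d₁)). Then there exists an integer m such that for every t ∈ ℝ with c₂ t ≠ a₂ and c₃ t ≠ a₃: sgn(c₃) Θ(c₃ t − a₃) − sgn(c₂) Θ(c₂ t − a₂) − sgn(c₁) Θ((c₃ t − a₃)/(a₂ − c₂ t)) = m. -/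
namespace Real

theorem sign_eq_coe_sign (r : ℝ) : sign r = (SignType.sign r : ℝ) := by
  rcases lt_trichotomy r 0 with hr | rfl | hr
  · simp [sign_of_neg hr, _root_.sign_neg hr]
  · simp
  · simp [sign_of_pos hr, _root_.sign_pos hr]

theorem sign_mul (x y : ℝ) : sign (x * y) = sign x * sign y := by
  simp only [sign_eq_coe_sign, _root_.sign_mul, SignType.coe_mul]

theorem sign_div (x y : ℝ) : sign (x / y) = sign x * sign y := by
  rw [div_eq_mul_inv, sign_mul, sign_inv]

theorem sign_mul_self_of_ne_zero {x : ℝ} (hx : x ≠ 0) : sign x * sign x = 1 := by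
  rcases sign_apply_eq_of_ne_zero x hx with h | h <;> norm_num [h]

theorem sign_add_sign_sub_sign_add (x y : ℝ) :
    sign x + sign y - sign (x + y) = sign x * sign y * sign (x + y) := by
  simp only [sign]
  split_ifs <;> norm_num <;> linarith

theorem exists_int_sign_eq (x : ℝ) : ∃ n : ℤ, sign x = n := by
  rcases sign_apply_eq x with h | h | h <;> rw [h]
  exacts [⟨-1, by simp⟩, ⟨0, by simp⟩, ⟨1, by simp⟩]

end Real

open Real (sign)

theorem exists_int_heaviside_eq (x : ℝ) : ∃ n : ℤ, heaviside x = n := by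
  unfold heaviside
  split_ifs
  exacts [⟨1, by simp⟩, ⟨0, by simp⟩]

theorem heaviside_eq_of_ne_zero {x : ℝ} (hx : x ≠ 0) : heaviside x = (1 + sign x) / 2 := by
  rcases hx.lt_or_gt with h | h
  · simp [heaviside, h.not_gt, Real.sign_of_neg h]
  · norm_num [heaviside, h, Real.sign_of_pos h]

theorem phase_eq_heaviside_mul_sign_sub {c₁ c₂ c₃ X₂ X₃ : ℝ} (hc₁ : c₁ ≠ 0) (hc₂ : c₂ ≠ 0)
    (hX₂ : X₂ ≠ 0) (hX₃ : X₃ ≠ 0) (h : c₂ * X₃ - c₃ * X₂ = c₁) :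
    sign c₃ * heaviside X₃ - sign c₂ * heaviside X₂ - sign c₁ * heaviside (X₃ / -X₂) =
      heaviside (c₁ * c₂) * (sign c₃ - sign c₁) := by
  have hcocycle := Real.sign_add_sign_sub_sign_add (c₃ * X₂) c₁
  rw [show c₃ * X₂ + c₁ = c₂ * X₃ by linarith, Real.sign_mul, Real.sign_mul] at hcocycle
  rw [heaviside_eq_of_ne_zero hX₃, heaviside_eq_of_ne_zero hX₂,
    heaviside_eq_of_ne_zero (div_ne_zero hX₃ (neg_ne_zero.2 hX₂)),
    heaviside_eq_of_ne_zero (mul_ne_zero hc₁ hc₂), Real.sign_div, Real.sign_neg, Real.sign_mul]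
  have h₁ := Real.sign_mul_self_of_ne_zero hc₁
  have h₂ := Real.sign_mul_self_of_ne_zero hX₂
  have h₃ := Real.sign_mul_self_of_ne_zero hX₃
  -- the cocycle identity times `sgn X₂ sgn X₃`, up to multiples of `sgn² - 1`
  linear_combination (sign X₂ * sign X₃ / 2) * hcocycle + (sign c₂ / 2) * h₁
    + (sign c₃ * sign X₃ * (sign c₁ * sign c₂ * sign X₃ - 1) / 2) * h₂
    + (sign c₂ * (sign c₁ * sign c₃ + sign X₂) / 2) * h₃

theorem universal_cover_phase_constant_general
    (a₁ c₁ a₂ b₂ c₂ d₂ : ℝ)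
    (h2 : a₂ * d₂ - b₂ * c₂ = 1)
    (hc1 : c₁ ≠ 0) (hc2 : c₂ ≠ 0) :
    ∃ m : ℤ, ∀ t : ℝ, c₂ * t ≠ a₂ → (a₁ * c₂ + c₁ * d₂) * t ≠ a₁ * a₂ + b₂ * c₁ →
      Real.sign (a₁ * c₂ + c₁ * d₂) *
          heaviside ((a₁ * c₂ + c₁ * d₂) * t - (a₁ * a₂ + b₂ * c₁)) -
        Real.sign c₂ * heaviside (c₂ * t - a₂) -
        Real.sign c₁ *
          heaviside (((a₁ * c₂ + c₁ * d₂) * t - (a₁ * a₂ + b₂ * c₁)) / (a₂ - c₂ * t)) =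
      (m : ℝ) := by
  obtain ⟨k, hk⟩ := exists_int_heaviside_eq (c₁ * c₂)
  obtain ⟨n₁, hn₁⟩ := Real.exists_int_sign_eq c₁
  obtain ⟨n₃, hn₃⟩ := Real.exists_int_sign_eq (a₁ * c₂ + c₁ * d₂)
  refine ⟨k * (n₃ - n₁), fun t ht₂ ht₃ => ?_⟩
  have hdet : c₂ * ((a₁ * c₂ + c₁ * d₂) * t - (a₁ * a₂ + b₂ * c₁)) -
      (a₁ * c₂ + c₁ * d₂) * (c₂ * t - a₂) = c₁ := by
    linear_combination c₁ * h2
  have hphase := phase_eq_heaviside_mul_sign_sub hc1 hc2 (sub_ne_zero.2 ht₂)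
    (sub_ne_zero.2 ht₃) hdet
  rw [neg_sub] at hphase
  rw [hphase, hk, hn₁, hn₃]
  push_cast
  ring

/-- Constancy of the universal-cover phase under composition of Möbius maps (Appendix C.1):
with `a₃ = a₁a₂ + b₂c₁` and `c₃ = a₁c₂ + c₁d₂` the entries of the matrix product, the
integer-valued function
`sgn(c₃) Θ(c₃t - a₃) - sgn(c₂) Θ(c₂t - a₂) - sgn(c₁) Θ((c₃t - a₃)/(a₂ - c₂t))`
is constant in `t`. -/
theorem universal_cover_phase_constant
    (a₁ b₁ c₁ d₁ a₂ b₂ c₂ d₂ : ℝ)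
    (h1 : a₁ * d₁ - b₁ * c₁ = 1) (h2 : a₂ * d₂ - b₂ * c₂ = 1)
    (hc1 : c₁ ≠ 0) (hc2 : c₂ ≠ 0) :
    ∃ m : ℤ, ∀ t : ℝ, c₂ * t ≠ a₂ → (a₁ * c₂ + c₁ * d₂) * t ≠ a₁ * a₂ + b₂ * c₁ →
      Real.sign (a₁ * c₂ + c₁ * d₂) *
          heaviside ((a₁ * c₂ + c₁ * d₂) * t - (a₁ * a₂ + b₂ * c₁)) -
        Real.sign c₂ * heaviside (c₂ * t - a₂) -
        Real.sign c₁ *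
          heaviside (((a₁ * c₂ + c₁ * d₂) * t - (a₁ * a₂ + b₂ * c₁)) / (a₂ - c₂ * t)) =
      (m : ℝ) :=
  universal_cover_phase_constant_general a₁ c₁ a₂ b₂ c₂ d₂ h2 hc1 hc2
end

section
/- For all reals p < q with q ≠ 0, and all s ∈ ℝ such that q e^{πs} ≠ p e^{−πs}, one has sgn(s) · Θ(p e^{−πs} − q e^{πs}) − Θ(−q) + Θ((p e^{−πs} − q e^{πs})/q) = 0. -/
/-- Vanishing of the universal-cover phase `ψ` for the modular flow of a time-interval algebra
(Appendix C.6): for `p < q` with `q ≠ 0` and `qe^{πs} ≠ pe^{-πs}`,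
`sgn(s) Θ(pe^{-πs} - qe^{πs}) - Θ(-q) + Θ((pe^{-πs} - qe^{πs})/q) = 0`. -/
theorem modular_flow_phase_vanishes
    (p q s : ℝ) (hpq : p < q) (hq : q ≠ 0)
    (hne : q * Real.exp (Real.pi * s) ≠ p * Real.exp (-(Real.pi * s))) :
    Real.sign s * heaviside (p * Real.exp (-(Real.pi * s)) - q * Real.exp (Real.pi * s)) -
        heaviside (-q) +
        heaviside ((p * Real.exp (-(Real.pi * s)) - q * Real.exp (Real.pi * s)) / q) = 0 := by
  set a := Real.exp (-(Real.pi * s)) with ha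
  set b := Real.exp (Real.pi * s) with hb
  have hapos : 0 < a := Real.exp_pos _
  have hbpos : 0 < b := Real.exp_pos _
  have hD : p * a - q * b ≠ 0 := by
    intro h
    exact hne ((sub_eq_zero.mp h).symm)
  rcases lt_trichotomy s 0 with hs | hs | hs
  · -- s < 0 : b < 1 < a
    have hπs : Real.pi * s < 0 := mul_neg_of_pos_of_neg Real.pi_pos hs
    have hb1 : b < 1 := Real.exp_lt_one_iff.mpr hπs
    have ha1 : 1 < a := Real.one_lt_exp_iff.mpr (by linarith)
    rw [Real.sign_of_neg hs]
    rcases hq.lt_or_gt with hqneg | hqpos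
    · -- q < 0 : show D < 0
      have hp : p < 0 := lt_trans hpq hqneg
      have hDneg : p * a - q * b < 0 := by nlinarith
      have h1 : heaviside (p * a - q * b) = 0 := if_neg (by linarith)
      have h2 : heaviside (-q) = 1 := if_pos (by linarith)
      have h3 : heaviside ((p * a - q * b) / q) = 1 :=
        if_pos (div_pos_of_neg_of_neg hDneg hqneg)
      rw [h1, h2, h3]; ring
    · -- q > 0
      have h2 : heaviside (-q) = 0 := if_neg (by simp; linarith)
      have h3 : heaviside ((p * a - q * b) / q) = heaviside (p * a - q * b) := by
        unfold heaviside
        simp only [lt_div_iff₀ hqpos, zero_mul]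
      rw [h2, h3]; ring
  · -- s = 0
    subst hs
    simp only [mul_zero, neg_zero, Real.exp_zero] at ha hb
    rw [Real.sign_zero]
    have hDneg : p * a - q * b < 0 := by rw [ha, hb]; ring_nf; linarith
    have h1 : heaviside (p * a - q * b) = 0 := if_neg (by linarith)
    rcases hq.lt_or_gt with hqneg | hqpos
    · have h2 : heaviside (-q) = 1 := if_pos (by linarith)
      have h3 : heaviside ((p * a - q * b) / q) = 1 :=
        if_pos (div_pos_of_neg_of_neg hDneg hqneg)
      rw [h1, h2, h3]; ring
    · have h2 : heaviside (-q) = 0 := if_neg (by simp; linarith)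
      have h3 : heaviside ((p * a - q * b) / q) = 0 :=
        if_neg (by rw [not_lt]; exact le_of_lt (div_neg_of_neg_of_pos hDneg hqpos))
      rw [h1, h2, h3]; ring
  · -- s > 0 : a < 1 < b
    have hπs : 0 < Real.pi * s := mul_pos Real.pi_pos hs
    have hb1 : 1 < b := Real.one_lt_exp_iff.mpr hπs
    have ha1 : a < 1 := Real.exp_lt_one_iff.mpr (by linarith)
    rw [Real.sign_of_pos hs]
    rcases hq.lt_or_gt with hqneg | hqpos
    · -- q < 0 : D either sign works
      have h2 : heaviside (-q) = 1 := if_pos (by linarith)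
      rcases hD.lt_or_gt with hDneg | hDpos
      · have h1 : heaviside (p * a - q * b) = 0 := if_neg (by linarith)
        have h3 : heaviside ((p * a - q * b) / q) = 1 :=
          if_pos (div_pos_of_neg_of_neg hDneg hqneg)
        rw [h1, h2, h3]; ring
      · have h1 : heaviside (p * a - q * b) = 1 := if_pos hDpos
        have h3 : heaviside ((p * a - q * b) / q) = 0 :=
          if_neg (by rw [not_lt]; exact le_of_lt (div_neg_of_pos_of_neg hDpos hqneg))
        rw [h1, h2, h3]; ring
    · -- q > 0 : show D < 0
      have hDneg : p * a - q * b < 0 := by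
        rcases le_or_gt p 0 with hp | hp
        · nlinarith
        · nlinarith
      have h1 : heaviside (p * a - q * b) = 0 := if_neg (by linarith)
      have h2 : heaviside (-q) = 0 := if_neg (by simp; linarith)
      have h3 : heaviside ((p * a - q * b) / q) = 0 :=
        if_neg (by rw [not_lt]; exact le_of_lt (div_neg_of_neg_of_pos hDneg hqpos))
      rw [h1, h2, h3]; ring
end

section
/- Let p < q be reals. For s ∈ ℝ define φ_s(t) = (q − t) e^{πs} + (t − p) e^{−πs}, D_s(t) = φ_s(t)/(q − p), and m_s(t) = ((q − t) p e^{πs} + (t − p) q e^{−πs})/φ_s(t) whenever φ_s(t) ≠ 0. Then for all s ∈ ℝ and all reals x, y, z with φ_s(x) ≠ 0, φ_{−s}(y) ≠ 0, φ_{−s}(z) ≠ 0, y ≠ z, and m_{−s}(y) ≠ m_{−s}(z): (y − m_s(x)) (m_s(x) − z) / (y − z) = D_s(x)^{−2} · (m_{−s}(y) − x) (x − m_{−s}(z)) / (m_{−s}(y) − m_{−s}(z)). -/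
/-!
`m_s` is a Möbius map with denominator `φ_s` and determinant `(q - p)²`, so
`m_s a - m_s b = (q - p)² (a - b)/(φ_s(a) φ_s(b)) = (a - b)/(D_s(a) D_s(b))`; hence the kernel
`(b - a)(a - c)/(b - c)` picks up the factor `D_s(a)⁻²` under `m_s`, the factors at `b` and `c`
cancelling. Since `m_{-s}` inverts `m_s`, substituting `y = m_s(m_{-s} y)` and
`z = m_s(m_{-s} z)` gives the identity.
-/

/-- Conformal factor numerator of the modular flow of the interval `(p, q)`:
`φ_s(t) = (q - t) e^{πs} + (t - p) e^{-πs}`. -/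
noncomputable def phiFlow (p q s t : ℝ) : ℝ :=
  (q - t) * Real.exp (Real.pi * s) + (t - p) * Real.exp (-(Real.pi * s))

/-- Conformal factor of the modular flow: `D_s(t) = φ_s(t)/(q - p)`. -/
noncomputable def DFlow (p q s t : ℝ) : ℝ := phiFlow p q s t / (q - p)

/-- Point transformation implemented by the modular flow of the interval `(p, q)`:
`m_s(t) = ((q - t) p e^{πs} + (t - p) q e^{-πs}) / φ_s(t)`. -/
noncomputable def mFlow (p q s t : ℝ) : ℝ :=
  ((q - t) * p * Real.exp (Real.pi * s) + (t - p) * q * Real.exp (-(Real.pi * s))) /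
    phiFlow p q s t

section ModularFlow

variable {p q s : ℝ}

theorem mFlow_sub_mFlow {a b : ℝ} (ha : phiFlow p q s a ≠ 0) (hb : phiFlow p q s b ≠ 0) :
    mFlow p q s a - mFlow p q s b =
      (q - p) ^ 2 * (a - b) / (phiFlow p q s a * phiFlow p q s b) := by
  rw [mFlow, mFlow, div_sub_div _ _ ha hb]
  congr 1
  simp only [phiFlow, Real.exp_neg]
  field_simp
  ring

theorem phiFlow_mFlow_neg_mul {y : ℝ} (hy : phiFlow p q (-s) y ≠ 0) :
    phiFlow p q s (mFlow p q (-s) y) * phiFlow p q (-s) y = (q - p) ^ 2 := by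
  have hexp : Real.exp (Real.pi * s) * Real.exp (-(Real.pi * s)) = 1 := by
    rw [← Real.exp_add, add_neg_cancel, Real.exp_zero]
  simp only [mFlow, phiFlow, mul_neg, neg_neg] at *
  field_simp
  linear_combination (q - p) ^ 2 * hexp

theorem phiFlow_mFlow_neg_ne_zero (hpq : p ≠ q) {y : ℝ} (hy : phiFlow p q (-s) y ≠ 0) :
    phiFlow p q s (mFlow p q (-s) y) ≠ 0 :=
  left_ne_zero_of_mul (phiFlow_mFlow_neg_mul hy ▸ pow_ne_zero 2 (sub_ne_zero.2 hpq.symm))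

theorem mFlow_mFlow_neg (hpq : p ≠ q) {y : ℝ} (hy : phiFlow p q (-s) y ≠ 0) :
    mFlow p q s (mFlow p q (-s) y) = y := by
  rw [mFlow, div_eq_iff (phiFlow_mFlow_neg_ne_zero hpq hy)]
  simp only [mFlow, phiFlow, mul_neg, neg_neg] at *
  field_simp
  ring

theorem cross_ratio_kernel_mFlow {a b c : ℝ} (hpq : p ≠ q) (ha : phiFlow p q s a ≠ 0)
    (hb : phiFlow p q s b ≠ 0) (hc : phiFlow p q s c ≠ 0) :
    (mFlow p q s b - mFlow p q s a) * (mFlow p q s a - mFlow p q s c) /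
        (mFlow p q s b - mFlow p q s c) =
      DFlow p q s a ^ (-2 : ℤ) * ((b - a) * (a - c) / (b - c)) := by
  have hqp : q - p ≠ 0 := sub_ne_zero.2 hpq.symm
  rw [mFlow_sub_mFlow hb ha, mFlow_sub_mFlow ha hc, mFlow_sub_mFlow hb hc, DFlow]
  field_simp

end ModularFlow

theorem hkll_kernel_cross_ratio_covariance_general
    (p q s x y z : ℝ) (hpq : p < q)
    (hx : phiFlow p q s x ≠ 0) (hy : phiFlow p q (-s) y ≠ 0) (hz : phiFlow p q (-s) z ≠ 0) :
    (y - mFlow p q s x) * (mFlow p q s x - z) / (y - z) =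
      (DFlow p q s x) ^ (-2 : ℤ) *
        ((mFlow p q (-s) y - x) * (x - mFlow p q (-s) z) /
          (mFlow p q (-s) y - mFlow p q (-s) z)) := by
  conv_lhs => rw [← mFlow_mFlow_neg hpq.ne hy, ← mFlow_mFlow_neg hpq.ne hz]
  exact cross_ratio_kernel_mFlow hpq.ne hx
    (phiFlow_mFlow_neg_ne_zero hpq.ne hy) (phiFlow_mFlow_neg_ne_zero hpq.ne hz)

/-- Cross-ratio covariance of the HKLL smearing kernel under the modular flow (key algebraic
step of Lemma 16):
`(y - m_s(x))(m_s(x) - z)/(y - z) = D_s(x)^{-2} (m_{-s}(y) - x)(x - m_{-s}(z))/(m_{-s}(y) - m_{-s}(z))`. -/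
theorem hkll_kernel_cross_ratio_covariance
    (p q s x y z : ℝ) (hpq : p < q)
    (hx : phiFlow p q s x ≠ 0) (hy : phiFlow p q (-s) y ≠ 0) (hz : phiFlow p q (-s) z ≠ 0)
    (hyz : y ≠ z) (hmyz : mFlow p q (-s) y ≠ mFlow p q (-s) z) :
    (y - mFlow p q s x) * (mFlow p q s x - z) / (y - z) =
      (DFlow p q s x) ^ (-2 : ℤ) *
        ((mFlow p q (-s) y - x) * (x - mFlow p q (-s) z) /
          (mFlow p q (-s) y - mFlow p q (-s) z)) :=
  hkll_kernel_cross_ratio_covariance_general p q s x y z hpq hx hy hz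
end

section
/- Let Δ ∈ ℝ and p < q be reals, and for s ∈ ℝ define φ_s(t) = (q − t) e^{πs} + (t − p) e^{−πs}, D_s(t) = φ_s(t)/(q − p), and m_s(t) = ((q − t) p e^{πs} + (t − p) q e^{−πs})/φ_s(t). Suppose f : ℝ → ℝ satisfies f(t) = D_s(t)^{2Δ−2} · f(m_s(t)) for every s ∈ ℝ and every t ∈ (p, q). Then for every t ∈ (p, q): f(t) = f((p + q)/2) · (4 (q − t)(t − p)/(q − p)²)^{Δ−1}. -/
/-- Lemma 18 (modular zero mode): a smearing function on `(p, q)` invariant under the modular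
flow, `f(t) = D_s(t)^{2Δ-2} f(m_s(t))`, is necessarily proportional to the HKLL smearing
kernel: `f(t) = f((p+q)/2) (4(q - t)(t - p)/(q - p)²)^{Δ-1}` on `(p, q)`. -/
theorem modular_zero_mode_is_hkll_kernel
    (Δ p q : ℝ) (hpq : p < q) (f : ℝ → ℝ)
    (hf : ∀ s : ℝ, ∀ t ∈ Set.Ioo p q,
      f t = (DFlow p q s t) ^ (2 * Δ - 2) * f (mFlow p q s t)) :
    ∀ t ∈ Set.Ioo p q,
      f t = f ((p + q) / 2) * (4 * (q - t) * (t - p) / (q - p) ^ 2) ^ (Δ - 1) := by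
  intro t ht
  obtain ⟨ht1, ht2⟩ := ht
  set u := Real.sqrt (t - p) with hu_def
  set v := Real.sqrt (q - t) with hv_def
  have hu : 0 < u := Real.sqrt_pos.2 (by linarith)
  have hv : 0 < v := Real.sqrt_pos.2 (by linarith)
  have hu2 : u ^ 2 = t - p := Real.sq_sqrt (by linarith)
  have hv2 : v ^ 2 = q - t := Real.sq_sqrt (by linarith)
  set s := Real.log (u / v) / Real.pi with hs_def
  have hpis : Real.pi * s = Real.log (u / v) := by
    rw [hs_def]; field_simp
  have hexp : Real.exp (Real.pi * s) = u / v := by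
    rw [hpis]; exact Real.exp_log (div_pos hu hv)
  have hexpn : Real.exp (-(Real.pi * s)) = v / u := by
    rw [Real.exp_neg, hexp, inv_div]
  have hphi : phiFlow p q s t = 2 * (u * v) := by
    unfold phiFlow
    rw [hexp, hexpn, ← hu2, ← hv2]
    field_simp
    ring
  have hm : mFlow p q s t = (p + q) / 2 := by
    unfold mFlow
    rw [hphi, hexp, hexpn, ← hu2, ← hv2]
    field_simp
  have hD : DFlow p q s t = 2 * (u * v) / (q - p) := by
    unfold DFlow; rw [hphi]
  have hDnn : (0:ℝ) ≤ 2 * (u * v) / (q - p) :=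
    le_of_lt (div_pos (by positivity) (by linarith))
  have hb : (2 * (u * v) / (q - p)) ^ (2 : ℕ) = 4 * (q - t) * (t - p) / (q - p) ^ 2 := by
    rw [← hu2, ← hv2]
    field_simp
    ring
  have hpow : (2 * (u * v) / (q - p)) ^ (2 * Δ - 2 : ℝ)
      = (4 * (q - t) * (t - p) / (q - p) ^ 2) ^ (Δ - 1) := by
    rw [show (2 * Δ - 2 : ℝ) = (2 : ℕ) * (Δ - 1) by push_cast; ring,
      Real.rpow_natCast_mul hDnn, hb]
  have key := hf s t ⟨ht1, ht2⟩
  rw [hm, hD, hpow] at key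
  rw [key, mul_comm]
end

section
/- Let n ≥ 1 be an integer and a, b, c, d ∈ ℝ with ad − bc = 1 and c ≠ 0. Let f, h : ℝ → ℂ be continuous with compact support, such that supp f ∩ supp h = ∅ and −d/c ∉ supp f ∪ supp h. Define f'(t) = (a − ct)^{2(n−1)} f((dt − b)/(a − ct)) for t ≠ a/c and f'(a/c) = 0, and define h' analogously from h. Then both double integrals below are well defined (the integrands are continuous with compact support since the supports of f', h' and of f, h are disjoint compact sets), and ∬_{ℝ×ℝ} f'(t₁) h'(t₂) (t₁ − t₂)^{−2n} dt₁ dt₂ = ∬_{ℝ×ℝ} f(t₁) h(t₂) (t₁ − t₂)^{−2n} dt₁ dt₂. -/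
open MeasureTheory

/-- Möbius pullback of a smearing function for integer scaling dimension `n`:
`f'(t) = (a - ct)^{2(n-1)} f((dt - b)/(a - ct))` for `t ≠ a/c`, with `f'(a/c) = 0`. -/
noncomputable def moebiusPull (n : ℕ) (a b c d : ℝ) (f : ℝ → ℂ) (t : ℝ) : ℂ :=
  if t = a / c then 0
  else (((a - c * t) ^ (2 * (n - 1)) : ℝ) : ℂ) * f ((d * t - b) / (a - c * t))

lemma integral_compl_singleton' (p : ℝ) (g : ℝ → ℂ) :
    ∫ x in ({p}ᶜ : Set ℝ), g x = ∫ x, g x := by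
  have : (volume : Measure ℝ).restrict ({p}ᶜ) = volume.restrict Set.univ :=
    Measure.restrict_congr_set (by
      rw [Filter.eventuallyEq_univ, mem_ae_iff]; simp)
  rw [this, Measure.restrict_univ]

noncomputable def psiM (a b c d : ℝ) : ℝ → ℝ := fun t => (d * t - b) / (a - c * t)

lemma psiM_ne {a c : ℝ} (hc : c ≠ 0) (t : ℝ) (ht : t ∈ ({a / c}ᶜ : Set ℝ)) :
    a - c * t ≠ 0 := by
  intro h0
  exact ht (by rw [Set.mem_singleton_iff, eq_div_iff hc]; linarith)

lemma psiM_deriv {a b c d : ℝ} (hdet : a * d - b * c = 1) (hc : c ≠ 0)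
    (t : ℝ) (ht : t ∈ ({a / c}ᶜ : Set ℝ)) :
    HasDerivWithinAt (psiM a b c d) (((a - c * t) ^ 2)⁻¹) ({a / c}ᶜ : Set ℝ) t := by
  have hne := psiM_ne hc t ht
  have h1 : HasDerivAt (fun t : ℝ => d * t - b) d t := by
    simpa using ((hasDerivAt_id t).const_mul d).sub_const b
  have h2 : HasDerivAt (fun t : ℝ => a - c * t) (-c) t := by
    simpa using ((hasDerivAt_id t).const_mul c).const_sub a
  have h3 := h1.div h2 hne
  have heq : (d * (a - c * t) - (d * t - b) * -c) / (a - c * t) ^ 2 = ((a - c * t) ^ 2)⁻¹ := by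
    rw [inv_eq_one_div]
    congr 1
    linear_combination hdet
  rw [heq] at h3
  exact h3.hasDerivWithinAt

lemma psiM_key {a b c d : ℝ} (hdet : a * d - b * c = 1) (hc : c ≠ 0)
    (t₁ t₂ : ℝ) (h₁ : t₁ ∈ ({a / c}ᶜ : Set ℝ)) (h₂ : t₂ ∈ ({a / c}ᶜ : Set ℝ)) :
    psiM a b c d t₁ - psiM a b c d t₂ = (t₁ - t₂) / ((a - c * t₁) * (a - c * t₂)) := by
  have hn₁ := psiM_ne hc t₁ h₁
  have hn₂ := psiM_ne hc t₂ h₂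
  unfold psiM
  rw [div_sub_div _ _ hn₁ hn₂]
  congr 1
  linear_combination (t₁ - t₂) * hdet

lemma psiM_inj {a b c d : ℝ} (hdet : a * d - b * c = 1) (hc : c ≠ 0) :
    Set.InjOn (psiM a b c d) ({a / c}ᶜ : Set ℝ) := by
  intro t₁ h₁ t₂ h₂ heq
  have hk := psiM_key hdet hc t₁ t₂ h₁ h₂
  rw [heq, sub_self] at hk
  have hn₁ := psiM_ne hc t₁ h₁
  have hn₂ := psiM_ne hc t₂ h₂
  have := (div_eq_zero_iff.mp hk.symm).resolve_right (mul_ne_zero hn₁ hn₂)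
  linarith

lemma psiM_image {a b c d : ℝ} (hdet : a * d - b * c = 1) (hc : c ≠ 0) :
    psiM a b c d '' ({a / c}ᶜ : Set ℝ) = ({-d / c}ᶜ : Set ℝ) := by
  ext y
  constructor
  · rintro ⟨t, ht, rfl⟩
    have hne := psiM_ne hc t ht
    intro hy
    rw [Set.mem_singleton_iff] at hy
    unfold psiM at hy
    rw [div_eq_div_iff hne hc] at hy
    nlinarith [hy]
  · intro hy
    have hcy : c * y + d ≠ 0 := by
      intro h0
      exact hy (by rw [Set.mem_singleton_iff, eq_div_iff hc]; linarith)
    refine ⟨(a * y + b) / (c * y + d), ?_, ?_⟩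
    · intro hmem
      rw [Set.mem_singleton_iff, div_eq_div_iff hcy hc] at hmem
      nlinarith [hmem]
    · have hden : a - c * ((a * y + b) / (c * y + d)) = 1 / (c * y + d) := by
        field_simp
        linear_combination hdet
      have hne : a - c * ((a * y + b) / (c * y + d)) ≠ 0 := by
        rw [hden]; exact one_div_ne_zero hcy
      unfold psiM
      rw [div_eq_iff hne, hden]
      have hu : (c * y + d) * (c * y + d)⁻¹ = 1 := mul_inv_cancel₀ hcy
      linear_combination (y * (c * y + d)⁻¹) * hdet + b * hu

lemma moebius_integral_change {a b c d : ℝ} (hdet : a * d - b * c = 1) (hc : c ≠ 0)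
    (g : ℝ → ℂ) :
    ∫ y : ℝ, g y
      = ∫ t in ({a / c}ᶜ : Set ℝ), |((a - c * t) ^ 2)⁻¹| • g (psiM a b c d t) := by
  rw [← integral_compl_singleton' (-d / c) g, ← psiM_image hdet hc,
    integral_image_eq_integral_abs_deriv_smul ((measurableSet_singleton _).compl)
      (psiM_deriv hdet hc) (psiM_inj hdet hc) g]

lemma moebius_coeff (n : ℕ) (hn : 1 ≤ n) (r₁ r₂ : ℝ) (hr₁ : r₁ ≠ 0) (hr₂ : r₂ ≠ 0) :
    (r₁ ^ 2)⁻¹ * ((r₂ ^ 2)⁻¹ * (r₁ * r₂) ^ (2 * n))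
      = r₁ ^ (2 * (n - 1)) * r₂ ^ (2 * (n - 1)) := by
  obtain ⟨m, rfl⟩ : ∃ m, n = m + 1 := ⟨n - 1, by omega⟩
  have h1 : 2 * (m + 1) = 2 * m + 2 := by ring
  have h2 : m + 1 - 1 = m := by omega
  rw [h1, h2]
  field_simp
  ring

/-- Invariance of the smeared two-point pairing of the conformal generalized free field with
integer dimension `Δ = n` under the Möbius action (kernel-level content of Lemma 2 and
Theorem 3): for `f, h` continuous with disjoint compact supports avoiding the pole `-d/c`,
`∬ f'(t₁) h'(t₂) (t₁ - t₂)^{-2n} = ∬ f(t₁) h(t₂) (t₁ - t₂)^{-2n}`. -/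
theorem moebius_invariance_two_point_pairing
    (n : ℕ) (hn : 1 ≤ n) (a b c d : ℝ) (hdet : a * d - b * c = 1) (hc : c ≠ 0)
    (f h : ℝ → ℂ) (hf : Continuous f) (hfc : HasCompactSupport f)
    (hh : Continuous h) (hhc : HasCompactSupport h)
    (hdisj : Disjoint (tsupport f) (tsupport h))
    (hpole : -d / c ∉ tsupport f ∪ tsupport h) :
    (∫ t₁ : ℝ, ∫ t₂ : ℝ,
        moebiusPull n a b c d f t₁ * moebiusPull n a b c d h t₂ *
          ((((t₁ - t₂) ^ (2 * n) : ℝ) : ℂ))⁻¹) =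
      ∫ t₁ : ℝ, ∫ t₂ : ℝ,
        f t₁ * h t₂ * ((((t₁ - t₂) ^ (2 * n) : ℝ) : ℂ))⁻¹ := by
  have hms : MeasurableSet ({a / c}ᶜ : Set ℝ) := (measurableSet_singleton _).compl
  refine Eq.symm ?_
  rw [moebius_integral_change hdet hc
    (fun y => ∫ t₂ : ℝ, f y * h t₂ * ((((y - t₂) ^ (2 * n) : ℝ) : ℂ))⁻¹)]
  rw [← integral_compl_singleton' (a / c)
    (fun t₁ => ∫ t₂ : ℝ, moebiusPull n a b c d f t₁ * moebiusPull n a b c d h t₂ *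
      ((((t₁ - t₂) ^ (2 * n) : ℝ) : ℂ))⁻¹)]
  refine setIntegral_congr_fun hms fun t₁ ht₁ => ?_
  rw [moebius_integral_change hdet hc
    (fun t₂ => f (psiM a b c d t₁) * h t₂ *
      ((((psiM a b c d t₁ - t₂) ^ (2 * n) : ℝ) : ℂ))⁻¹)]
  rw [← integral_smul]
  rw [← integral_compl_singleton' (a / c)
    (fun t₂ => moebiusPull n a b c d f t₁ * moebiusPull n a b c d h t₂ *
      ((((t₁ - t₂) ^ (2 * n) : ℝ) : ℂ))⁻¹)]
  refine setIntegral_congr_fun hms fun t₂ ht₂ => ?_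
  -- pointwise identity
  have hn₁ := psiM_ne hc t₁ ht₁
  have hn₂ := psiM_ne hc t₂ ht₂
  have habs₁ : |((a - c * t₁) ^ 2)⁻¹| = ((a - c * t₁) ^ 2)⁻¹ :=
    abs_of_nonneg (inv_nonneg.2 (sq_nonneg _))
  have habs₂ : |((a - c * t₂) ^ 2)⁻¹| = ((a - c * t₂) ^ 2)⁻¹ :=
    abs_of_nonneg (inv_nonneg.2 (sq_nonneg _))
  have hK' : (psiM a b c d t₁ - psiM a b c d t₂) ^ (2 * n)
      = (t₁ - t₂) ^ (2 * n) / ((a - c * t₁) * (a - c * t₂)) ^ (2 * n) := by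
    rw [psiM_key hdet hc t₁ t₂ ht₁ ht₂, div_pow]
  rw [moebiusPull, moebiusPull, if_neg (by simpa using ht₁ : t₁ ≠ a / c),
    if_neg (by simpa using ht₂ : t₂ ≠ a / c), habs₁, habs₂, hK']
  have hcoef := moebius_coeff n hn (a - c * t₁) (a - c * t₂) hn₁ hn₂
  have hcoefC : (((a - c * t₁) ^ 2 : ℝ) : ℂ)⁻¹ *
      ((((a - c * t₂) ^ 2 : ℝ) : ℂ)⁻¹ * ((((a - c * t₁) * (a - c * t₂)) : ℝ) : ℂ) ^ (2 * n))
      = (((a - c * t₁) : ℝ) : ℂ) ^ (2 * (n - 1)) * (((a - c * t₂) : ℝ) : ℂ) ^ (2 * (n - 1)) := by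
    push_cast
    exact_mod_cast congrArg (Complex.ofReal) hcoef
  rw [Complex.real_smul, Complex.real_smul]
  push_cast
  simp only [psiM]
  rw [inv_div]
  push_cast at hcoefC
  linear_combination (f ((d * t₁ - b) / (a - c * t₁)) * h ((d * t₂ - b) / (a - c * t₂)) *
    (((t₁ : ℂ) - t₂) ^ (2 * n))⁻¹) * hcoefC
end
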